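/- arXiv:2601.21764 — 2 statements merged into one kernel-verified Lean document; each statement's English description precedes it below -/
import Mathlib

section
/- Let R : ℝ^n → ℝ^n be continuously differentiable and suppose there exists μ > 0 such that for every u ∈ ℝ^n, the Jacobian DR(u) is invertible with ‖DR(u)⁻¹‖ ≤ 1/μ. Then R is a bijection from ℝ^n to ℝ^n; in particular, there exists a unique u with R(u) = 0. -/
/-!
Write `K = 1/μ`. A continuous lift `g` through `R` of the segment `t ↦ R a + t • v` has velocity
`DR(g t)⁻¹ v`, so it is `K‖v‖`-Lipschitz and stays in a compact ball around `a`. At the supremum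
`T₀` of the times up to which a lift exists, a limit point of the endpoints of such lifts lies
over `R a + T₀ • v`, and the local inverse of `R` there extends one of these lifts to
`[0, min (T₀ + δ) 1]`, forcing `T₀ = 1`. So every segment lifts, which gives surjectivity.

If `R a = R b`, lift for each point `γ s` of the segment from `a` to `b` the segment from
`R (γ s)` to `R b`. By homotopy lifting for local homeomorphisms, the endpoints of these lifts
depend continuously on `s`; they lie in the discrete fibre over `R b`, so they are constant.
At `s = 0` and `s = 1` the lifted paths are constant, ending at `a` and at `b`.
-/

open Set Filter Topology Metric unitInterval

theorem exists_lift_Icc_extension {X Y : Type*} [TopologicalSpace X] [TopologicalSpace Y]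
    {f : X → Y} {p : ℝ → Y} (hp : Continuous p) (c : OpenPartialHomeomorph X Y)
    (hc : EqOn f c c.source) {g : ℝ → X} {T T' : ℝ} (hT : 0 ≤ T) (hTT' : T ≤ T')
    (hg : ContinuousOn g (Icc 0 T)) (hlift : ∀ t ∈ Icc 0 T, f (g t) = p t)
    (hgT : g T ∈ c.source) (hpc : ∀ t ∈ Icc T T', p t ∈ c.target) :
    ∃ g' : ℝ → X, ContinuousOn g' (Icc 0 T') ∧ g' 0 = g 0 ∧ ∀ t ∈ Icc 0 T', f (g' t) = p t := by
  have hjoin : c.symm (p T) = g T := by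
    rw [← hlift T ⟨hT, le_rfl⟩, hc hgT, c.left_inv hgT]
  have hf_symm : ∀ t ∈ Icc T T', f (c.symm (p t)) = p t := fun t ht => by
    rw [hc (c.map_target (hpc t ht)), c.right_inv (hpc t ht)]
  refine ⟨fun t => if t ≤ T then g t else c.symm (p t), ?_, if_pos hT, ?_⟩
  · rw [← Icc_union_Icc_eq_Icc hT hTT']
    refine ContinuousOn.union_of_isClosed ?_ ?_ isClosed_Icc isClosed_Icc
    · exact hg.congr fun t ht => if_pos ht.2
    · refine (c.continuousOn_symm.comp hp.continuousOn hpc).congr fun t ht => ?_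
      rcases ht.1.eq_or_lt with rfl | hlt
      · exact (if_pos le_rfl).trans hjoin.symm
      · exact if_neg hlt.not_ge
  · intro t ht
    by_cases htT : t ≤ T
    · simpa only [if_pos htT] using hlift t ⟨ht.1, htT⟩
    · simpa only [if_neg htT] using hf_symm t ⟨(not_le.1 htT).le, ht.2⟩

theorem IsLocalHomeomorph.injective_of_exists_lift_segment {E F : Type*} [NormedAddCommGroup E]
    [NormedSpace ℝ E] [NormedAddCommGroup F] [NormedSpace ℝ F] {f : E → F}
    (hf : IsLocalHomeomorph f)
    (hlift : ∀ (a : E) (v : F), ∃ Γ : C(I, E), Γ 0 = a ∧ ∀ t : I, f (Γ t) = f a + (t : ℝ) • v) :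
    Function.Injective f := by
  intro a b hab
  choose Γ hΓ0 hΓ using hlift
  have hsep := T2Space.isSeparatedMap f
  have hconst : ∀ x, Γ x 0 1 = x := fun x =>
    (hsep.const_of_comp hf.isLocallyInjective (Γ x 0).continuous
      (fun t t' => by simp only [hΓ, smul_zero]) 1 0).trans (hΓ0 x 0)
  set γ : I → E := fun s => a + (s : ℝ) • (b - a)
  set G : I × I → E := fun ts => Γ (γ ts.2) (f b - f (γ ts.2)) ts.1
  have hfc := hf.continuous
  have hG : Continuous G := by
    refine hf.continuous_lift hsep
      ⟨fun ts => f (γ ts.2) + (ts.1 : ℝ) • (f b - f (γ ts.2)), by fun_prop⟩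
      (funext fun ts => hΓ _ _ _) ?_ fun s => (Γ (γ s) (f b - f (γ s))).continuous
    simp only [G, hΓ0]
    fun_prop
  have hend : ∀ s, f (G (1, s)) = f b := fun s => by simp [G, hΓ]
  have hG01 := hsep.const_of_comp hf.isLocallyInjective (hG.comp (Continuous.prodMk_right 1))
    (fun s s' => (hend s).trans (hend s').symm) 0 1
  simpa [G, γ, hab, hconst] using hG01

section Lifting

variable {E F : Type*} [NormedAddCommGroup E] [NormedSpace ℝ E] [NormedAddCommGroup F]
  [NormedSpace ℝ F]

theorem isLocalHomeomorph_of_hasStrictFDerivAt [CompleteSpace E] {f : E → F}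
    {f' : E → E ≃L[ℝ] F} (hf : ∀ x, HasStrictFDerivAt f (f' x : E →L[ℝ] F) x) :
    IsLocalHomeomorph f :=
  .mk f fun x => ⟨(hf x).toOpenPartialHomeomorph f, (hf x).mem_toOpenPartialHomeomorph_source,
    fun _ _ => rfl⟩

theorem HasStrictFDerivAt.hasDerivWithinAt_of_lift [CompleteSpace E] {f : E → F}
    {f' : E ≃L[ℝ] F} {g : ℝ → E} {p : ℝ → F} {p' : F} {s : Set ℝ} {t : ℝ}
    (hf : HasStrictFDerivAt f (f' : E →L[ℝ] F) (g t)) (hg : ContinuousWithinAt g s t)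
    (hlift : ∀ τ ∈ s, f (g τ) = p τ) (ht : t ∈ s) (hp : HasDerivWithinAt p p' s t) :
    HasDerivWithinAt g (f'.symm p') s t := by
  have hinv := hf.to_localInverse.hasFDerivAt
  rw [hlift t ht] at hinv
  refine (hinv.comp_hasDerivWithinAt t hp).congr_of_eventuallyEq ?_ ?_
  · filter_upwards [hg.eventually hf.eventually_left_inverse, self_mem_nhdsWithin]
      with τ hτ hτs
    rw [Function.comp_apply, ← hlift τ hτs, hτ]
  · rw [Function.comp_apply, ← hlift t ht, hf.eventually_left_inverse.self_of_nhds]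

theorem norm_sub_le_of_lift_affine [CompleteSpace E] {f : E → F} {f' : E → E ≃L[ℝ] F} {K : ℝ}
    (hf : ∀ x, HasStrictFDerivAt f (f' x : E →L[ℝ] F) x)
    (hK : ∀ x, ‖((f' x).symm : F →L[ℝ] E)‖ ≤ K) {g : ℝ → E} {s : Set ℝ} (hs : Convex ℝ s)
    (hg : ContinuousOn g s) {y v : F} (hlift : ∀ t ∈ s, f (g t) = y + t • v) {t t' : ℝ}
    (ht : t ∈ s) (ht' : t' ∈ s) : ‖g t' - g t‖ ≤ K * ‖v‖ * ‖t' - t‖ := by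
  have hline : ∀ τ, HasDerivWithinAt (fun t : ℝ => y + t • v) v s τ := fun τ => by
    simpa using (((hasDerivAt_id τ).smul_const v).const_add y).hasDerivWithinAt
  refine hs.norm_image_sub_le_of_norm_hasDerivWithin_le
    (fun τ hτ => (hf (g τ)).hasDerivWithinAt_of_lift (hg τ hτ) hlift hτ (hline τ))
    (fun τ _ => ?_) ht ht'
  exact ((f' (g τ)).symm.toContinuousLinearMap.le_opNorm v).trans
    (mul_le_mul_of_nonneg_right (hK _) (norm_nonneg v))

theorem exists_lift_segment [ProperSpace E] {f : E → F} {f' : E → E ≃L[ℝ] F} {K : ℝ}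
    (hf : ∀ x, HasStrictFDerivAt f (f' x : E →L[ℝ] F) x)
    (hK : ∀ x, ‖((f' x).symm : F →L[ℝ] E)‖ ≤ K) (a : E) (v : F) :
    ∃ Γ : C(I, E), Γ 0 = a ∧ ∀ t : I, f (Γ t) = f a + (t : ℝ) • v := by
  have hloc := isLocalHomeomorph_of_hasStrictFDerivAt hf
  set p : ℝ → F := fun t => f a + t • v
  have hp : Continuous p := by fun_prop
  set S := {T | T ∈ Icc (0 : ℝ) 1 ∧
    ∃ g : ℝ → E, ContinuousOn g (Icc 0 T) ∧ g 0 = a ∧ ∀ t ∈ Icc 0 T, f (g t) = p t}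
  suffices h1 : 1 ∈ S by
    obtain ⟨-, g, hg, hg0, hlift⟩ := h1
    exact ⟨⟨fun t => g t, hg.comp_continuous continuous_subtype_val Subtype.prop⟩, hg0,
      fun t => hlift t t.2⟩
  have h0S : 0 ∈ S := ⟨⟨le_rfl, zero_le_one⟩, fun _ => a, continuousOn_const, rfl,
    fun t ht => by simp [p, le_antisymm ht.2 ht.1]⟩
  have hbdd : BddAbove S := ⟨1, fun T hT => hT.1.2⟩
  obtain ⟨u, -, hu, huS⟩ := exists_seq_tendsto_sSup ⟨0, h0S⟩ hbdd
  choose hu01 g hg hg0 hglift using huS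
  have hball : ∀ n, g n (u n) ∈ closedBall a (K * ‖v‖) := fun n => by
    have hK0 : 0 ≤ K * ‖v‖ := mul_nonneg ((norm_nonneg _).trans (hK a)) (norm_nonneg v)
    have := norm_sub_le_of_lift_affine hf hK (convex_Icc 0 (u n)) (hg n) (hglift n)
      ⟨le_rfl, (hu01 n).1⟩ ⟨(hu01 n).1, le_rfl⟩
    rw [hg0, sub_zero, Real.norm_of_nonneg (hu01 n).1] at this
    exact mem_closedBall_iff_norm.2 (this.trans (mul_le_of_le_one_right hK0 (hu01 n).2))
  obtain ⟨x, -, φ, hφ, hx⟩ := (isCompact_closedBall a (K * ‖v‖)).tendsto_subseq hball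
  have huφ := hu.comp hφ.tendsto_atTop
  have hfx : f x = p (sSup S) := by
    refine tendsto_nhds_unique ((hloc.continuous.tendsto x).comp hx) ?_
    exact ((hp.tendsto _).comp huφ).congr fun n => (hglift _ _ ⟨(hu01 _).1, le_rfl⟩).symm
  obtain ⟨c, hxc, rfl⟩ := hloc x
  obtain ⟨δ, hδ, hδc⟩ := Metric.eventually_nhds_iff.1 <| hp.continuousAt.eventually_mem
    (c.open_target.mem_nhds (hfx ▸ c.map_source hxc))
  obtain ⟨n, hn_src, hn_dist⟩ := ((hx.eventually (c.open_source.mem_nhds hxc)).and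
    (huφ.eventually (ball_mem_nhds _ hδ))).exists
  set T' := min (sSup S + δ / 2) 1
  have hT'S : T' ∈ S := by
    have hle : u (φ n) ≤ sSup S := le_csSup hbdd ⟨hu01 _, g _, hg _, hg0 _, hglift _⟩
    have hgt : sSup S - δ < u (φ n) := by
      rw [Function.comp_apply, Real.dist_eq, abs_lt] at hn_dist
      linarith [hn_dist.1]
    have hT' : u (φ n) ≤ T' := le_min (by linarith) (hu01 _).2
    have hnear : ∀ t ∈ Icc (u (φ n)) T', p t ∈ c.target := fun t ht => by
      refine hδc (abs_lt.2 ⟨?_, ?_⟩)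
      · linarith [ht.1]
      · linarith [ht.2.trans (min_le_left _ _)]
    obtain ⟨g', hg', hg'0, hg'lift⟩ := exists_lift_Icc_extension hp c (eqOn_refl _ _)
      (hu01 _).1 hT' (hg _) (hglift _) hn_src hnear
    exact ⟨⟨(hu01 _).1.trans hT', min_le_right _ _⟩, g', hg', hg'0.trans (hg0 _), hg'lift⟩
  have hT'1 : T' = 1 := by
    have := le_csSup hbdd hT'S
    rcases min_choice (sSup S + δ / 2) 1 with h | h <;> linarith
  exact hT'1 ▸ hT'S

end Lifting

theorem hadamard_uniform_inverse_bijective_general (n : ℕ)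
    (R : EuclideanSpace ℝ (Fin n) → EuclideanSpace ℝ (Fin n)) (μ : ℝ)
    (hR : ContDiff ℝ 1 R)
    (hinv : ∀ u, ∃ e : EuclideanSpace ℝ (Fin n) ≃L[ℝ] EuclideanSpace ℝ (Fin n),
      (e : EuclideanSpace ℝ (Fin n) →L[ℝ] EuclideanSpace ℝ (Fin n)) = fderiv ℝ R u ∧
      ‖(e.symm : EuclideanSpace ℝ (Fin n) →L[ℝ] EuclideanSpace ℝ (Fin n))‖ ≤ 1 / μ) :
    Function.Bijective R ∧ ∃! u, R u = 0 := by
  choose D hD hDinv using hinv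
  have hstrict : ∀ u, HasStrictFDerivAt R (D u : _ →L[ℝ] _) u := fun u =>
    (hD u).symm ▸ hR.contDiffAt.hasStrictFDerivAt one_ne_zero
  have hlift := exists_lift_segment hstrict hDinv
  have hbij : Function.Bijective R := by
    refine ⟨(isLocalHomeomorph_of_hasStrictFDerivAt hstrict).injective_of_exists_lift_segment
      hlift, fun y => ?_⟩
    obtain ⟨Γ, -, hΓ⟩ := hlift 0 (y - R 0)
    exact ⟨Γ 1, by simpa using hΓ 1⟩
  exact ⟨hbij, hbij.existsUnique 0⟩

/-- Hadamard's theorem: a C¹ map of ℝⁿ whose Jacobian is everywhere invertible with a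
uniform bound `‖DR(u)⁻¹‖ ≤ 1/μ` is a bijection; in particular R(u)=0 has a unique solution. -/
theorem hadamard_uniform_inverse_bijective (n : ℕ)
    (R : EuclideanSpace ℝ (Fin n) → EuclideanSpace ℝ (Fin n)) (μ : ℝ)
    (hμ : 0 < μ) (hR : ContDiff ℝ 1 R)
    (hinv : ∀ u, ∃ e : EuclideanSpace ℝ (Fin n) ≃L[ℝ] EuclideanSpace ℝ (Fin n),
      (e : EuclideanSpace ℝ (Fin n) →L[ℝ] EuclideanSpace ℝ (Fin n)) = fderiv ℝ R u ∧
      ‖(e.symm : EuclideanSpace ℝ (Fin n) →L[ℝ] EuclideanSpace ℝ (Fin n))‖ ≤ 1 / μ) :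
    Function.Bijective R ∧ ∃! u, R u = 0 :=
  hadamard_uniform_inverse_bijective_general n R μ hR hinv
end

section
/- Discrete comparison principle for strongly monotone schemes: Let J and B be disjoint finite index sets, and for each j ∈ J let H_j : ℝ × ℝ^{V_j} → ℝ satisfy: (i) H_j(u, p) is nondecreasing in each component of p, and (ii) H_j(u, p) − H_j(v, p) ≥ λ(u − v) for all u ≥ v, with λ > 0. Suppose u, v : J ∪ B → ℝ satisfy H_j(u_j, ∇_G u_j) = r_j for j ∈ J, u_j = b_j for j ∈ B, and H_j(v_j, ∇_G v_j) = 0 for j ∈ J, v_j = c_j for j ∈ B, where ∇_G w_j = ((w_j − w_k)/Δ_{kj})_{k ∈ V_j} with Δ_{kj} > 0. Then max_{j ∈ J∪B} (u_j − v_j)₊ ≤ max( max_{j∈B}(b_j − c_j)₊ , (1/λ) max_{j∈J} (r_j)₊ ). -/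
/-- Discrete comparison principle for strongly monotone schemes:
max (u - v)₊ over J ∪ B is bounded by max( max_B (b - c)₊ , (1/λ) max_J (r)₊ ). -/
theorem discrete_comparison_principle {ι : Type*} [DecidableEq ι]
    (J B : Finset ι) (hdisj : Disjoint J B) (hJ : J.Nonempty) (hB : B.Nonempty)
    (V : ι → Finset ι) (hV : ∀ j ∈ J, V j ⊆ J ∪ B) (hVj : ∀ j ∈ J, j ∉ V j)
    (Δ : ι → ι → ℝ) (hΔ : ∀ j ∈ J, ∀ k ∈ V j, 0 < Δ k j)
    (H : ι → ℝ → (ι → ℝ) → ℝ) (lam : ℝ) (hlam : 0 < lam)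
    (hmono : ∀ j ∈ J, ∀ (w : ℝ) (p p' : ι → ℝ),
      (∀ k ∈ V j, p k ≤ p' k) → H j w p ≤ H j w p')
    (hstrong : ∀ j ∈ J, ∀ (w w' : ℝ) (p : ι → ℝ),
      w' ≤ w → lam * (w - w') ≤ H j w p - H j w' p)
    (u v b c r : ι → ℝ)
    (hu : ∀ j ∈ J, H j (u j) (fun k => (u j - u k) / Δ k j) = r j)
    (hub : ∀ j ∈ B, u j = b j)
    (hv : ∀ j ∈ J, H j (v j) (fun k => (v j - v k) / Δ k j) = 0)
    (hvb : ∀ j ∈ B, v j = c j) :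
    ∀ j ∈ J ∪ B, max (u j - v j) 0 ≤
      max (B.sup' hB fun k => max (b k - c k) 0)
          ((1 / lam) * J.sup' hJ fun k => max (r k) 0) := by
  have hJB : (J ∪ B).Nonempty := hJ.mono Finset.subset_union_left
  obtain ⟨b0, hb0⟩ := id hB
  set RHS := max (B.sup' hB fun k => max (b k - c k) 0)
      ((1 / lam) * J.sup' hJ fun k => max (r k) 0) with hRHSdef
  have hRHS0 : 0 ≤ RHS := le_trans (le_trans (le_max_right (b b0 - c b0) 0)
      (Finset.le_sup' (fun k => max (b k - c k) 0) hb0)) (le_max_left _ _)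
  obtain ⟨j0, hj0, hmax⟩ := Finset.exists_mem_eq_sup' hJB (fun k => u k - v k)
  have hle : ∀ k ∈ J ∪ B, u k - v k ≤ u j0 - v j0 := by
    intro k hk
    exact le_of_le_of_eq (Finset.le_sup' (fun k => u k - v k) hk) hmax
  have hM : u j0 - v j0 ≤ RHS := by
    rcases Finset.mem_union.mp hj0 with hj0J | hj0B
    · by_cases hMneg : u j0 - v j0 ≤ 0
      · exact hMneg.trans hRHS0
      push_neg at hMneg
      have huv : v j0 ≤ u j0 := by linarith
      have h1 : H j0 (u j0) (fun k => (v j0 - v k) / Δ k j0)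
          ≤ H j0 (u j0) (fun k => (u j0 - u k) / Δ k j0) := by
        apply hmono j0 hj0J
        intro k hk
        have hd := hΔ j0 hj0J k hk
        have := hle k (hV j0 hj0J hk)
        have hnum : v j0 - v k ≤ u j0 - u k := by linarith
        exact div_le_div_of_nonneg_right hnum hd.le
      have h2 := hstrong j0 hj0J (u j0) (v j0)
          (fun k => (v j0 - v k) / Δ k j0) huv
      rw [hv j0 hj0J] at h2
      have hr : lam * (u j0 - v j0) ≤ r j0 := by
        rw [← hu j0 hj0J]; linarith
      have hrsup : r j0 ≤ J.sup' hJ fun k => max (r k) 0 :=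
        le_trans (le_max_left _ 0) (Finset.le_sup' (fun k => max (r k) 0) hj0J)
      have : u j0 - v j0 ≤ (1 / lam) * J.sup' hJ fun k => max (r k) 0 := by
        rw [div_mul_eq_mul_div, le_div_iff₀ hlam, one_mul, mul_comm]
        exact hr.trans hrsup
      exact this.trans (le_max_right _ _)
    · have : u j0 - v j0 = b j0 - c j0 := by rw [hub j0 hj0B, hvb j0 hj0B]
      rw [this]
      exact le_trans (le_trans (le_max_left _ 0) (Finset.le_sup' (fun k => max (b k - c k) 0) hj0B))
        (le_max_left _ _)
  intro j hj
  exact max_le ((hle j hj).trans hM) hRHS0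
end
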